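/- Let L ≥ 1 and let X_1, …, X_L be independent random variables such that X_i follows the Pearson type III distribution with parameters (a_i, b, m_i), where a_i > 0 for all i and b > 0 is common to all the X_i. Set sa = Σ_{i=1}^{L} a_i and sm = Σ_{i=1}^{L} m_i, and assume sm > 0. Let SZ = 1/(1 + e^{−(X_1 + ⋯ + X_L)}). Then for every integer n ≥ 1, the series Σ_{l=0}^{∞} C(n + l − 1, l) (−1)^{l} e^{−sm·l} (1 + l/b)^{−sa} converges absolutely and E[SZ^n] = Σ_{l=0}^{∞} C(n + l − 1, l) (−1)^{l} e^{−sm·l} (1 + l/b)^{−sa}. -/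

import Mathlib

/-!
For `s > 0` the negative binomial series gives
`(1 + e^{-s})^{-n} = ∑ₗ C(n+l-1, l) (-1)^l e^{-l s}`. Each `X_i` exceeds `m_i` almost surely,
so `S = ∑ X_i ≥ sm > 0`; the series for `SZ^n` is then dominated by `∑ₗ C(n+l-1, l) e^{-sm l}`
and may be integrated termwise, which gives `∑ₗ C(n+l-1, l) (-1)^l E[e^{-l S}]`. By independence
`E[e^{t S}]` is the product of the Pearson type III moment generating functions
`e^{t m_i} (1 - t/b)^{-a_i}`, evaluated at `t = -l`.
-/

open MeasureTheory ProbabilityTheory Set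

/-- The Pearson type III density with shape `a`, inverse scale `b ≠ 0` and shift `m`,
supported on `(m, ∞)` when `b > 0` and on `(-∞, m)` when `b < 0`. -/
noncomputable def pearsonPDF (a b m : ℝ) (x : ℝ) : ℝ :=
  if (0 < b ∧ m < x) ∨ (b < 0 ∧ x < m) then
    |b| / Real.Gamma a * (b * (x - m)) ^ (a - 1) * Real.exp (-(b * (x - m)))
  else 0

open Real

lemma Nat.choose_succ_add_sub_one (k l : ℕ) : (k + 1 + l - 1).choose l = (l + k).choose k := by
  rw [show k + 1 + l - 1 = l + k by omega, Nat.choose_symm_add]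

lemma summable_choose_mul_exp_neg_mul {n : ℕ} (hn : 0 < n) {c : ℝ} (hc : 0 < c) :
    Summable fun l : ℕ => ((n + l - 1).choose l : ℝ) * exp (-(c * l)) := by
  obtain ⟨k, rfl⟩ : ∃ k, n = k + 1 := ⟨n - 1, by omega⟩
  have hr : ‖exp (-c)‖ < 1 := by
    rw [norm_of_nonneg (exp_pos _).le, exp_lt_one_iff]
    linarith
  refine (summable_choose_mul_geometric_of_norm_lt_one k hr).congr fun l => ?_
  rw [Nat.choose_succ_add_sub_one, ← exp_nat_mul, mul_comm c, mul_neg]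

lemma hasSum_logistic_pow {n : ℕ} (hn : 0 < n) {s : ℝ} (hs : 0 < s) :
    HasSum (fun l : ℕ => ((n + l - 1).choose l : ℝ) * (-1) ^ l * exp (-l * s))
      ((1 / (1 + exp (-s))) ^ n) := by
  obtain ⟨k, rfl⟩ : ∃ k, n = k + 1 := ⟨n - 1, by omega⟩
  have hr : ‖-exp (-s)‖ < 1 := by
    rw [norm_neg, norm_of_nonneg (exp_pos _).le, exp_lt_one_iff]
    linarith
  have h := hasSum_choose_mul_geometric_of_norm_lt_one k hr
  rw [sub_neg_eq_add, ← one_div_pow] at h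
  refine h.congr_fun fun l => ?_
  rw [Nat.choose_succ_add_sub_one, neg_pow (exp (-s)), ← exp_nat_mul, mul_neg, neg_mul, mul_assoc]

section Logistic

variable {Ω : Type*} [MeasurableSpace Ω] {μ : Measure Ω}

lemma hasSum_integral_logistic_pow [IsFiniteMeasure μ] {S : Ω → ℝ} (hS : AEMeasurable S μ)
    {c : ℝ} (hc : 0 < c) (hcS : ∀ᵐ ω ∂μ, c ≤ S ω) {n : ℕ} (hn : 0 < n) :
    HasSum (fun l : ℕ => ((n + l - 1).choose l : ℝ) * (-1) ^ l * mgf S μ (-l))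
      (∫ ω, (1 / (1 + exp (-S ω))) ^ n ∂μ) := by
  set F : ℕ → Ω → ℝ := fun l ω => ((n + l - 1).choose l : ℝ) * (-1) ^ l * exp (-l * S ω)
  have hF_le (l : ℕ) : ∀ᵐ ω ∂μ, ‖F l ω‖ ≤ ((n + l - 1).choose l : ℝ) * exp (-(c * l)) := by
    filter_upwards [hcS] with ω hω
    simp only [F, norm_mul, norm_pow, norm_neg, norm_one, one_pow, mul_one, norm_natCast,
      norm_of_nonneg (exp_pos _).le]
    gcongr
    nlinarith [(Nat.cast_nonneg l : (0 : ℝ) ≤ l)]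
  have hF_int (l : ℕ) : Integrable (F l) μ := .of_bound (by fun_prop) _ (hF_le l)
  have hF_sum : Summable fun l => ∫ ω, ‖F l ω‖ ∂μ := by
    refine .of_nonneg_of_le (fun l => integral_nonneg fun _ => norm_nonneg _) (fun l => ?_)
      ((summable_choose_mul_exp_neg_mul hn hc).mul_right (μ.real univ))
    refine (le_abs_self _).trans ?_
    simpa using
      norm_integral_le_of_norm_le_const (f := fun ω => ‖F l ω‖) (by simpa using hF_le l)
  have h := hasSum_integral_of_summable_integral_norm hF_int hF_sum
  rw [← integral_congr_ae (hcS.mono fun ω hω =>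
    ((hasSum_logistic_pow hn (hc.trans_le hω)).tsum_eq).symm)] at h
  refine h.congr_fun fun l => ?_
  rw [integral_const_mul, mgf]

end Logistic

noncomputable def pearsonMeasure (a b m : ℝ) : Measure ℝ :=
  volume.withDensity fun x => ENNReal.ofReal (pearsonPDF a b m x)

section Pearson

variable {a b m t : ℝ}

lemma pearsonPDF_nonneg (ha : 0 < a) (b m x : ℝ) : 0 ≤ pearsonPDF a b m x := by
  unfold pearsonPDF
  split_ifs with h
  · have : 0 < b * (x - m) := by rcases h with ⟨hb, hx⟩ | ⟨hb, hx⟩ <;> nlinarith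
    have := Gamma_pos_of_pos ha
    positivity
  · rfl

lemma measurable_pearsonPDF (a b m : ℝ) : Measurable (pearsonPDF a b m) := by
  unfold pearsonPDF
  refine Measurable.ite ?_ (by fun_prop) measurable_const
  measurability

lemma pearsonPDF_of_le (hb : 0 < b) {x : ℝ} (hx : x ≤ m) : pearsonPDF a b m x = 0 := by
  rw [pearsonPDF, if_neg]
  rintro (⟨-, h⟩ | ⟨h, -⟩) <;> linarith

lemma pearsonPDF_sub (a b m x : ℝ) : pearsonPDF a b m x = pearsonPDF a b 0 (x - m) := by
  simp only [pearsonPDF, sub_pos, sub_neg, sub_zero]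

lemma pearsonPDF_zero_of_pos (hb : 0 < b) (a : ℝ) :
    pearsonPDF a b 0 =
      (Ioi 0).indicator fun y => b ^ a / Gamma a * (y ^ (a - 1) * exp (-(b * y))) := by
  ext y
  by_cases hy : 0 < y
  · rw [pearsonPDF, if_pos (.inl ⟨hb, hy⟩), indicator_of_mem (mem_Ioi.2 hy), sub_zero,
      abs_of_pos hb, mul_rpow hb.le hy.le, rpow_sub_one hb.ne']
    field_simp
  · rw [pearsonPDF_of_le hb (not_lt.1 hy), indicator_of_notMem (notMem_Ioi.2 (not_lt.1 hy))]

lemma integral_exp_mul_pearsonPDF (ha : 0 < a) (hb : 0 < b) (ht : t < b) (m : ℝ) :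
    ∫ x, exp (t * x) * pearsonPDF a b m x = exp (t * m) * (1 - t / b) ^ (-a) := by
  have hbt : 0 < b - t := by linarith
  have hshift : ∀ y, exp (t * (y + m)) * pearsonPDF a b 0 y = (Ioi 0).indicator
      (fun y => exp (t * m) * (b ^ a / Gamma a) * (y ^ (a - 1) * exp (-((b - t) * y)))) y := by
    intro y
    have hexp : exp (t * (y + m)) * exp (-(b * y)) = exp (t * m) * exp (-((b - t) * y)) := by
      rw [← exp_add, ← exp_add]
      ring_nf
    simp only [pearsonPDF_zero_of_pos hb, indicator_apply]
    split_ifs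
    · linear_combination b ^ a / Gamma a * y ^ (a - 1) * hexp
    · rw [mul_zero]
  calc ∫ x, exp (t * x) * pearsonPDF a b m x
      = ∫ y, exp (t * (y + m)) * pearsonPDF a b 0 y := by
        rw [← integral_sub_right_eq_self (fun y => exp (t * (y + m)) * pearsonPDF a b 0 y) m]
        simp_rw [sub_add_cancel, ← pearsonPDF_sub]
    _ = exp (t * m) * (b ^ a / Gamma a) * ((1 / (b - t)) ^ a * Gamma a) := by
        simp_rw [hshift]
        rw [integral_indicator measurableSet_Ioi, integral_const_mul,
          integral_rpow_mul_exp_neg_mul_Ioi ha hbt]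
    _ = exp (t * m) * (1 - t / b) ^ (-a) := by
        have : 1 - t / b = (b - t) / b := by field_simp
        rw [this, rpow_neg (div_pos hbt hb).le, div_rpow hbt.le hb.le,
          div_rpow zero_le_one hbt.le, one_rpow]
        have := (Gamma_pos_of_pos ha).ne'
        have := (rpow_pos_of_pos hbt a).ne'
        have := (rpow_pos_of_pos hb a).ne'
        field_simp

lemma mgf_id_pearsonMeasure (ha : 0 < a) (hb : 0 < b) (ht : t < b) :
    mgf id (pearsonMeasure a b m) t = exp (t * m) * (1 - t / b) ^ (-a) := by
  rw [mgf, pearsonMeasure, integral_withDensity_eq_integral_toReal_smul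
    (measurable_pearsonPDF a b m).ennreal_ofReal (ae_of_all _ fun _ => ENNReal.ofReal_lt_top),
    ← integral_exp_mul_pearsonPDF ha hb ht m]
  congr with x
  rw [ENNReal.toReal_ofReal (pearsonPDF_nonneg ha b m x), smul_eq_mul, mul_comm, id]

lemma pearsonMeasure_ae_lt (hb : 0 < b) : ∀ᵐ x ∂pearsonMeasure a b m, m < x := by
  rw [pearsonMeasure, ae_withDensity_iff (measurable_pearsonPDF a b m).ennreal_ofReal]
  refine ae_of_all _ fun x hx => not_le.1 fun hxm => hx ?_
  rw [pearsonPDF_of_le hb hxm, ENNReal.ofReal_zero]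

variable {Ω : Type*} [MeasurableSpace Ω] {μ : Measure Ω}

lemma mgf_of_map_eq_pearsonMeasure {X : Ω → ℝ} (hX : AEMeasurable X μ)
    (hlaw : μ.map X = pearsonMeasure a b m) (ha : 0 < a) (hb : 0 < b) (ht : t < b) :
    mgf X μ t = exp (t * m) * (1 - t / b) ^ (-a) := by
  rw [← mgf_id_map hX, hlaw, mgf_id_pearsonMeasure ha hb ht]

lemma ae_lt_of_map_eq_pearsonMeasure {X : Ω → ℝ} (hX : AEMeasurable X μ)
    (hlaw : μ.map X = pearsonMeasure a b m) (hb : 0 < b) : ∀ᵐ ω ∂μ, m < X ω :=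
  ae_of_ae_map hX (hlaw ▸ pearsonMeasure_ae_lt hb)

lemma ProbabilityTheory.iIndepFun.mgf_sum_of_map_eq_pearsonMeasure {ι : Type*}
    {X : ι → Ω → ℝ} {a m : ι → ℝ} (hindep : iIndepFun X μ) (hmeas : ∀ i, Measurable (X i))
    (hlaw : ∀ i, μ.map (X i) = pearsonMeasure (a i) b (m i)) (ha : ∀ i, 0 < a i) (hb : 0 < b)
    (ht : t < b) (s : Finset ι) :
    mgf (∑ i ∈ s, X i) μ t = exp (t * ∑ i ∈ s, m i) * (1 - t / b) ^ (-∑ i ∈ s, a i) := by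
  have hpos : 0 < 1 - t / b := sub_pos.2 ((div_lt_one hb).2 ht)
  rw [hindep.mgf_sum hmeas, Finset.prod_congr rfl fun i _ =>
      mgf_of_map_eq_pearsonMeasure (hmeas i).aemeasurable (hlaw i) (ha i) hb ht,
    Finset.prod_mul_distrib, ← exp_sum, Finset.mul_sum, ← Finset.sum_neg_distrib,
    rpow_sum_of_pos hpos]

end Pearson

theorem logitsum_pearsonIII_moments_pos_general {Ω : Type*} [MeasureSpace Ω]
    (L : ℕ)
    (a m : Fin L → ℝ) (b : ℝ) (ha : ∀ i, 0 < a i) (hb : 0 < b)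
    (hsm : 0 < ∑ i, m i)
    (X : Fin L → Ω → ℝ) (hmeas : ∀ i, Measurable (X i))
    (hindep : iIndepFun X ℙ)
    (hlaw : ∀ i, Measure.map (X i) ℙ =
      volume.withDensity fun x => ENNReal.ofReal (pearsonPDF (a i) b (m i) x))
    (n : ℕ) (hn : 1 ≤ n) :
    Summable (fun l : ℕ =>
      ((n + l - 1).choose l : ℝ) * (-1) ^ l * Real.exp (-((∑ i, m i) * l)) *
        (1 + l / b) ^ (-(∑ i, a i))) ∧
    ∫ ω, (1 / (1 + Real.exp (-∑ i, X i ω))) ^ n ∂ℙ =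
      ∑' l : ℕ,
        ((n + l - 1).choose l : ℝ) * (-1) ^ l * Real.exp (-((∑ i, m i) * l)) *
          (1 + l / b) ^ (-(∑ i, a i)) := by
  have := hindep.isProbabilityMeasure
  have hmgf (l : ℕ) : mgf (∑ i, X i) ℙ (-l) =
      exp (-((∑ i, m i) * l)) * (1 + l / b) ^ (-∑ i, a i) := by
    rw [hindep.mgf_sum_of_map_eq_pearsonMeasure hmeas hlaw ha hb
        ((neg_nonpos.2 l.cast_nonneg).trans_lt hb), neg_mul, mul_comm (l : ℝ), neg_div,
      sub_neg_eq_add]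
  have hS : ∀ᵐ ω ∂ℙ, ∑ i, m i ≤ (∑ i, X i) ω := by
    filter_upwards [ae_all_iff.2 fun i =>
      ae_lt_of_map_eq_pearsonMeasure (hmeas i).aemeasurable (hlaw i) hb] with ω hω
    simpa only [Finset.sum_apply] using Finset.sum_le_sum fun i _ => (hω i).le
  have h := hasSum_integral_logistic_pow (by fun_prop) hsm hS hn
  simp only [hmgf, ← mul_assoc, Finset.sum_apply] at h
  exact ⟨h.summable, h.tsum_eq.symm⟩

/-- **Moments of the logit sum of independent Pearson type III RVs with common `b > 0`
and `sm > 0`.** With `sa = Σ a_i`, `sm = Σ m_i > 0` and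
`SZ = 1/(1 + e^{-(X₁ + ⋯ + X_L)})`, for every `n ≥ 1` the series
`Σ_{l=0}^∞ C(n+l-1, l) (-1)^l e^{-sm·l} (1 + l/b)^{-sa}` converges absolutely and
`E[SZ^n] = Σ_{l=0}^∞ C(n+l-1, l) (-1)^l e^{-sm·l} (1 + l/b)^{-sa}`. -/
theorem logitsum_pearsonIII_moments_pos {Ω : Type*} [MeasureSpace Ω]
    [IsProbabilityMeasure (ℙ : Measure Ω)] (L : ℕ) (hL : 1 ≤ L)
    (a m : Fin L → ℝ) (b : ℝ) (ha : ∀ i, 0 < a i) (hb : 0 < b)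
    (hsm : 0 < ∑ i, m i)
    (X : Fin L → Ω → ℝ) (hmeas : ∀ i, Measurable (X i))
    (hindep : iIndepFun X ℙ)
    (hlaw : ∀ i, Measure.map (X i) ℙ =
      volume.withDensity fun x => ENNReal.ofReal (pearsonPDF (a i) b (m i) x))
    (n : ℕ) (hn : 1 ≤ n) :
    Summable (fun l : ℕ =>
      ((n + l - 1).choose l : ℝ) * (-1) ^ l * Real.exp (-((∑ i, m i) * l)) *
        (1 + l / b) ^ (-(∑ i, a i))) ∧
    ∫ ω, (1 / (1 + Real.exp (-∑ i, X i ω))) ^ n ∂ℙ =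
      ∑' l : ℕ,
        ((n + l - 1).choose l : ℝ) * (-1) ^ l * Real.exp (-((∑ i, m i) * l)) *
          (1 + l / b) ^ (-(∑ i, a i)) :=
  logitsum_pearsonIII_moments_pos_general L a m b ha hb hsm X hmeas hindep hlaw n hn
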